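/- arXiv:1305.2539 — 2 statements merged into one kernel-verified Lean document; each statement's English description precedes it below -/
import Mathlib

section
/- Let G = (V,E) be a finite connected k-regular graph (with k ≥ 2) whose adjacency matrix has at most d+1 distinct eigenvalues, and suppose |V| > M(k,d-1) = 1 + k·∑_{j=0}^{d-2}(k-1)^j. Write the (necessarily exactly d+1) distinct eigenvalues as θ_0 > θ_1 > ... > θ_d. Then for every pair of vertices x, y with ∂(x,y) = d and every i ∈ {1,...,d}, the (x,y)-entry of the spectral projection E_i equals -K_i/|V|, where K_i = ∏_{j∈{1,...,d}, j≠i} (θ_0 - θ_j)/(θ_i - θ_j). -/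
/-!
For `x, y` at distance `d`, the polynomial `p = ∏_{j ≠ 0, i} (X - θ j)` has degree `d - 1`, and
`(A ^ m) x y` counts walks of length `m < d` from `x` to `y`, so `p(A) x y = 0`. On the other hand
`p(A) = ∑ₘ p(θ m) • E m`, in which only the terms `m = 0, i` survive. Since eigenvalues of a
`k`-regular graph lie in `[-k, k]` and `k` is one of them (all-ones vector), `θ 0 = k`; for
connected `G` the `k`-eigenvectors are constant, which forces `E 0 = J / |V|`. Solving
`p(θ 0) / |V| + p(θ i) * E i x y = 0` for `E i x y` gives the formula.
-/

open Finset Matrix Polynomial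

namespace Matrix

variable {n : Type*} [Fintype n]

section CommRing

variable {R : Type*} [CommRing R] {A B : Matrix n n R} {t : R}

theorem mul_eq_smul_of_isSymm (hA : A.IsSymm) (hB : B.IsSymm) (h : A * B = t • B) :
    B * A = t • B := by
  simpa only [transpose_mul, transpose_smul, hA.eq, hB.eq] using congrArg transpose h

variable [DecidableEq n]

theorem pow_mul_of_mul_eq_smul (h : A * B = t • B) (m : ℕ) : A ^ m * B = t ^ m • B := by
  induction m with
  | zero => simp
  | succ m ih => rw [pow_succ, mul_assoc, h, mul_smul_comm, ih, smul_smul, pow_succ, mul_comm]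

theorem aeval_mul_of_mul_eq_smul (h : A * B = t • B) (q : R[X]) :
    aeval A q * B = q.eval t • B := by
  induction q using Polynomial.induction_on' with
  | add p q hp hq => rw [map_add, add_mul, hp, hq, eval_add, add_smul]
  | monomial m a =>
    rw [aeval_monomial, eval_monomial, mul_assoc, pow_mul_of_mul_eq_smul h m,
      Algebra.algebraMap_eq_smul_one, smul_mul_assoc, one_mul, smul_smul]

theorem mulVec_col_of_mul_eq_smul (h : A * B = t • B) (j : n) :
    A *ᵥ B.col j = t • B.col j := by
  rw [← mulVec_single_one, mulVec_mulVec, h, smul_mulVec]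

end CommRing

variable [DecidableEq n] {ι : Type*} [Fintype ι] {K : Type*} [Field K] {A : Matrix n n K}
  {θ : ι → K} {E : ι → Matrix n n K}

theorem aeval_eq_sum_eval_smul (hsum : ∑ i, E i = 1) (hAE : ∀ i, A * E i = θ i • E i)
    (q : K[X]) : aeval A q = ∑ i, q.eval (θ i) • E i := by
  calc aeval A q = aeval A q * ∑ i, E i := by rw [hsum, mul_one]
    _ = ∑ i, q.eval (θ i) • E i := by
      rw [mul_sum]; exact sum_congr rfl fun i _ => aeval_mul_of_mul_eq_smul (hAE i) q

theorem aeval_prod_X_sub_C_compl_pair [DecidableEq ι] (hsum : ∑ i, E i = 1)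
    (hAE : ∀ i, A * E i = θ i • E i) {a b : ι} (hab : a ≠ b) :
    aeval A (∏ j ∈ {a, b}ᶜ, (X - C (θ j))) =
      (∏ j ∈ {a, b}ᶜ, (θ a - θ j)) • E a + (∏ j ∈ {a, b}ᶜ, (θ b - θ j)) • E b := by
  rw [aeval_eq_sum_eval_smul hsum hAE, ← sum_add_sum_compl {a, b}, sum_pair hab,
    sum_eq_zero fun j hj => ?_, add_zero]
  · simp only [eval_prod, eval_sub, eval_X, eval_C]
  · rw [eval_prod, prod_eq_zero hj (by simp), zero_smul]

theorem exists_eq_of_mulVec_eq_smul (hsum : ∑ i, E i = 1) (hEA : ∀ i, E i * A = θ i • E i)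
    {v : n → K} (hv : v ≠ 0) {t : K} (h : A *ᵥ v = t • v) : ∃ i, θ i = t := by
  by_contra! hθ
  refine hv ?_
  have hE : ∀ i, E i *ᵥ v = 0 := fun i => by
    have key : (θ i - t) • (E i *ᵥ v) = 0 := by
      rw [sub_smul, ← smul_mulVec, ← hEA, ← mulVec_mulVec, h, mulVec_smul, sub_self]
    exact (smul_eq_zero.mp key).resolve_left (sub_ne_zero.mpr (hθ i))
  rw [← one_mulVec v, ← hsum, sum_mulVec]
  exact sum_eq_zero fun i _ => hE i

end Matrix

namespace SimpleGraph

variable {V : Type*} [Fintype V] {G : SimpleGraph V} [DecidableRel G.Adj]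

theorem adjMatrix_pow_apply_eq_zero_of_lt_dist [DecidableEq V] {R : Type*} [Semiring R] {m : ℕ}
    {x y : V} (h : m < G.dist x y) : (G.adjMatrix R ^ m) x y = 0 := by
  have : IsEmpty { p : G.Walk x y | p.length = m } :=
    ⟨fun ⟨p, hp⟩ => (dist_le p).not_gt (Set.mem_ofPred.mp hp ▸ h)⟩
  rw [adjMatrix_pow_apply_eq_card_walk, Fintype.card_eq_zero, Nat.cast_zero]

theorem aeval_adjMatrix_apply_eq_zero_of_natDegree_lt_dist [DecidableEq V] {R : Type*}
    [CommRing R] {p : R[X]} {x y : V} (h : p.natDegree < G.dist x y) :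
    aeval (G.adjMatrix R) p x y = 0 := by
  rw [aeval_eq_sum_range, Matrix.sum_apply]
  refine sum_eq_zero fun m hm => ?_
  rw [Matrix.smul_apply, adjMatrix_pow_apply_eq_zero_of_lt_dist
    ((Nat.lt_succ_iff.mp (mem_range.mp hm)).trans_lt h), smul_zero]

theorem IsRegularOfDegree.abs_le_of_adjMatrix_mulVec_eq_smul {k : ℕ}
    (hreg : G.IsRegularOfDegree k) {v : V → ℝ} (hv : v ≠ 0) {t : ℝ}
    (h : G.adjMatrix ℝ *ᵥ v = t • v) : |t| ≤ k := by
  obtain ⟨a, ha⟩ := Function.ne_iff.mp hv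
  obtain ⟨x, -, hx⟩ := exists_max_image univ (fun z => |v z|) ⟨a, mem_univ a⟩
  have hpos : 0 < |v x| := (abs_pos.mpr ha).trans_le (hx a (mem_univ a))
  refine le_of_mul_le_mul_right ?_ hpos
  calc |t| * |v x| = |∑ u ∈ G.neighborFinset x, v u| := by
        rw [← abs_mul, ← smul_eq_mul, ← Pi.smul_apply, ← h, adjMatrix_mulVec_apply]
    _ ≤ ∑ u ∈ G.neighborFinset x, |v u| := abs_sum_le_sum_abs _ _
    _ ≤ ∑ _u ∈ G.neighborFinset x, |v x| := sum_le_sum fun u _ => hx u (mem_univ u)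
    _ = k * |v x| := by rw [sum_const, card_neighborFinset_eq_degree, hreg x, nsmul_eq_mul]

theorem Connected.apply_eq_of_adjMatrix_mulVec_eq_smul [DecidableEq V] {k : ℕ}
    (hconn : G.Connected) (hreg : G.IsRegularOfDegree k) {v : V → ℝ}
    (h : G.adjMatrix ℝ *ᵥ v = (k : ℝ) • v) (a b : V) :
    v a = v b := by
  have hlap : G.lapMatrix ℝ *ᵥ v = 0 := by
    ext z
    rw [lapMatrix_mulVec_apply, hreg z, ← adjMatrix_mulVec_apply, h]
    simp
  exact (lapMatrix_mulVec_eq_zero_iff_forall_reachable G).mp hlap a b (hconn a b)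

theorem IsRegularOfDegree.eigenvalue_eq_of_forall_le [DecidableEq V] {k : ℕ}
    (hreg : G.IsRegularOfDegree k) {ι : Type*} [Fintype ι] {θ : ι → ℝ} {E : ι → Matrix V V ℝ}
    (hsymm : ∀ i, (E i).IsSymm) (hsum : ∑ i, E i = 1)
    (hAE : ∀ i, G.adjMatrix ℝ * E i = θ i • E i) {i₀ : ι} (hmax : ∀ i, θ i ≤ θ i₀)
    (hne : E i₀ ≠ 0) : θ i₀ = k := by
  obtain ⟨j, hj⟩ : ∃ j, (E i₀).col j ≠ 0 := by
    by_contra! h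
    exact hne (Matrix.ext fun a b => congrFun (h b) a)
  have hle : |θ i₀| ≤ k :=
    hreg.abs_le_of_adjMatrix_mulVec_eq_smul hj (mulVec_col_of_mul_eq_smul (hAE i₀) j)
  have hEA i := mul_eq_smul_of_isSymm (G.isSymm_adjMatrix) (hsymm i) (hAE i)
  have : Nonempty V := ⟨j⟩
  obtain ⟨m, hm⟩ := exists_eq_of_mulVec_eq_smul hsum hEA (v := Function.const V 1) (t := k)
    (Function.const_ne_zero.mpr one_ne_zero) (by ext; simp [hreg _])
  linarith [le_abs_self (θ i₀), hmax m]

theorem Connected.apply_eq_inv_card_of_adjMatrix_mul_eq_smul [DecidableEq V] {k : ℕ}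
    (hconn : G.Connected) (hreg : G.IsRegularOfDegree k) {P : Matrix V V ℝ} (hsymm : P.IsSymm)
    (hidem : P * P = P) (hne : P ≠ 0) (hAP : G.adjMatrix ℝ * P = (k : ℝ) • P) (a b : V) :
    P a b = (Fintype.card V : ℝ)⁻¹ := by
  have hcol a c j : P a j = P c j :=
    hconn.apply_eq_of_adjMatrix_mulVec_eq_smul hreg (mulVec_col_of_mul_eq_smul hAP j) a c
  obtain ⟨c, hc⟩ : ∃ c, ∀ a b, P a b = c :=
    ⟨P a b, fun a' b' => by rw [hcol a' a, ← hsymm.apply, hcol b' b, hsymm.apply]⟩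
  have hc0 : c ≠ 0 := fun h => hne (Matrix.ext fun a b => (hc a b).trans h)
  have hsq : (Fintype.card V : ℝ) * c * c = c := by
    simpa only [mul_apply, hc, sum_const, card_univ, nsmul_eq_mul, mul_assoc] using
      congrFun₂ hidem a b
  rw [hc]
  exact eq_inv_of_mul_eq_one_right (mul_right_cancel₀ hc0 (hsq.trans (one_mul c).symm))

end SimpleGraph

theorem stmt_3_general {V : Type*} [Fintype V] [DecidableEq V]
    (G : SimpleGraph V) [DecidableRel G.Adj] (k d : ℕ)
    (hconn : G.Connected) (hreg : G.IsRegularOfDegree k)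
    (θ : Fin (d + 1) → ℝ) (hθ : StrictAnti θ)
    (E : Fin (d + 1) → Matrix V V ℝ)
    (hsymm : ∀ i, (E i).IsSymm)
    (hidem : ∀ i, E i * E i = E i)
    (hsum : ∑ i, E i = 1)
    (hAE : ∀ i, G.adjMatrix ℝ * E i = θ i • E i)
    (hne : ∀ i, E i ≠ 0) :
    ∀ x y : V, G.dist x y = d → ∀ i : Fin (d + 1), i ≠ 0 →
      E i x y =
        -(∏ j ∈ Finset.univ.filter (fun j : Fin (d + 1) => j ≠ 0 ∧ j ≠ i),
            (θ 0 - θ j) / (θ i - θ j)) / (Fintype.card V : ℝ) := by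
  intro x y hxy i hi
  have hθ0 : θ 0 = k := hreg.eigenvalue_eq_of_forall_le hsymm hsum hAE
    (fun j => hθ.antitone (Fin.zero_le j)) (hne 0)
  have hE0 : E 0 x y = (Fintype.card V : ℝ)⁻¹ :=
    hconn.apply_eq_inv_card_of_adjMatrix_mul_eq_smul hreg (hsymm 0) (hidem 0) (hne 0)
      (hθ0 ▸ hAE 0) x y
  have hS : univ.filter (fun j : Fin (d + 1) => j ≠ 0 ∧ j ≠ i) = {0, i}ᶜ := by ext; simp
  have hdeg : (∏ j ∈ ({0, i} : Finset (Fin (d + 1)))ᶜ, (X - C (θ j))).natDegree < G.dist x y := by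
    rw [natDegree_prod_of_monic _ _ fun j _ => monic_X_sub_C (θ j)]
    simp only [natDegree_X_sub_C, sum_const, smul_eq_mul, mul_one, card_compl, card_pair hi.symm,
      Fintype.card_fin, hxy]
    omega
  have hrel := congrFun₂ (aeval_prod_X_sub_C_compl_pair hsum hAE hi.symm) x y
  rw [SimpleGraph.aeval_adjMatrix_apply_eq_zero_of_natDegree_lt_dist hdeg, Matrix.add_apply,
    Matrix.smul_apply, Matrix.smul_apply, hE0, smul_eq_mul, smul_eq_mul] at hrel
  have hprod : ∏ j ∈ ({0, i} : Finset (Fin (d + 1)))ᶜ, (θ i - θ j) ≠ 0 :=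
    prod_ne_zero_iff.mpr fun j hj => sub_ne_zero.mpr fun h => by
      simp_all [hθ.injective h]
  have hcard : (Fintype.card V : ℝ) ≠ 0 :=
    Nat.cast_ne_zero.mpr (Fintype.card_pos_iff.mpr ⟨x⟩).ne'
  rw [hS, prod_div_distrib]
  field_simp at hrel ⊢
  linear_combination -hrel

/-- Let `G` be a finite connected `k`-regular graph (`k ≥ 2`) with at most
`d+1` distinct adjacency eigenvalues and `|V| > M(k, d-1) = 1 + k * ∑_{j=0}^{d-2} (k-1)^j`.
Writing the (necessarily exactly `d+1`) distinct eigenvalues as `θ 0 > θ 1 > ⋯ > θ d`,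
with spectral projections `E 0, …, E d`, for every pair of vertices `x, y` at distance `d`
and every `i ∈ {1, …, d}`, the `(x,y)`-entry of `E i` equals `-K i / |V|`, where
`K i = ∏_{j ∈ {1,…,d}, j ≠ i} (θ 0 - θ j) / (θ i - θ j)`. -/
theorem stmt_3 {V : Type*} [Fintype V] [DecidableEq V]
    (G : SimpleGraph V) [DecidableRel G.Adj] (k d : ℕ) (hk : 2 ≤ k)
    (hconn : G.Connected) (hreg : G.IsRegularOfDegree k)
    (hspec : (spectrum ℝ (G.adjMatrix ℝ)).ncard ≤ d + 1)
    (hcard : Fintype.card V > 1 + k * ∑ j ∈ Finset.range (d - 1), (k - 1) ^ j)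
    (θ : Fin (d + 1) → ℝ) (hθ : StrictAnti θ)
    (E : Fin (d + 1) → Matrix V V ℝ)
    (hsymm : ∀ i, (E i).IsSymm)
    (hidem : ∀ i, E i * E i = E i)
    (horth : ∀ i j, i ≠ j → E i * E j = 0)
    (hsum : ∑ i, E i = 1)
    (hAE : ∀ i, G.adjMatrix ℝ * E i = θ i • E i)
    (hne : ∀ i, E i ≠ 0) :
    ∀ x y : V, G.dist x y = d → ∀ i : Fin (d + 1), i ≠ 0 →
      E i x y =
        -(∏ j ∈ Finset.univ.filter (fun j : Fin (d + 1) => j ≠ 0 ∧ j ≠ i),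
            (θ 0 - θ j) / (θ i - θ j)) / (Fintype.card V : ℝ) :=
  stmt_3_general G k d hconn hreg θ hθ E hsymm hidem hsum hAE hne
end

section
/- Let X be a finite subset of the unit sphere S^{m-1} ⊂ ℝ^m with |A(X)| ≤ d and |X| > N(m,d-1) = C(m+d-2, d-1) + C(m+d-3, d-2). Then |A(X)| = d; write A(X) = {θ*_1, ..., θ*_d} with θ*_1 > ... > θ*_d and set θ*_0 = 1. For each i ∈ {1,...,d}, the number -K*_i is an eigenvalue of the adjacency matrix A_i of the graph (X, R_i), with multiplicity (dimension of the kernel of A_i + K*_i·I) at least |X| - N(m,d-1) > 0, where K*_i = ∏_{j∈{1,...,d}, j≠i} (θ*_0 - θ*_j)/(θ*_i - θ*_j). -/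
open scoped RealInnerProductSpace

attribute [local instance] Classical.propDecidable

/-- `A(X)`: the set of inner products between distinct points of `X`. -/
def innerSet (m : ℕ) (X : Finset (EuclideanSpace ℝ (Fin m))) : Set ℝ :=
  {t | ∃ x ∈ X, ∃ y ∈ X, x ≠ y ∧ ⟪x, y⟫ = t}

/-- The adjacency matrix `A_i` of the graph `(X, R_i)`, where `R_i = {(x,y) : ⟪x,y⟫ = t}`. -/
noncomputable def relAdjMatrix (m : ℕ) (X : Finset (EuclideanSpace ℝ (Fin m))) (t : ℝ) :
    Matrix X X ℝ :=
  Matrix.of fun x y : X =>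
    if ⟪(x : EuclideanSpace ℝ (Fin m)), (y : EuclideanSpace ℝ (Fin m))⟫ = t then 1 else 0

/-- The absolute bound `N(m, t) = C(m+t-1, t) + C(m+t-2, t-1)`, the dimension of the space
of restrictions to `S^{m-1}` of real polynomials of degree at most `t` in `m` variables
(with the convention `C(n, -1) = 0` for `t = 0`). -/
def absBound (m t : ℕ) : ℕ :=
  Nat.choose (m + t - 1) t + (if t = 0 then 0 else Nat.choose (m + t - 2) (t - 1))

/-!
For `i ≠ 0` let `f_i` be the Lagrange basis polynomial of degree `d - 1` at the nodes
`θ 1, …, θ d`, so that `f_i (θ i) = 1`, `f_i (θ j) = 0` for `j ≠ i` and `f_i 1 = K i`.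
Then `A_i + K i • I` is the matrix `(f_i ⟪x, y⟫)_{x,y}`. Expanding `⟪x, y⟫ ^ k` in
monomials of `y`, each of its columns is the restriction to `X` of a polynomial of degree
`≤ d - 1`; on the sphere (where `∑ y_a ^ 2 = 1`) these are spanned by the monomials of degree
exactly `d - 1` and `d - 2`, a space of dimension at most `N(m, d-1)`. Rank–nullity then
bounds the kernel from below by `|X| - N(m, d-1)`.
-/

open Polynomial Matrix

section PolynomialFunctions

variable {m : ℕ} (X : Finset (EuclideanSpace ℝ (Fin m)))

noncomputable def monomialFun (k : ℕ) (s : Sym (Fin m) k) : X → ℝ :=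
  fun y => ((s : Multiset (Fin m)).map fun a => (y : EuclideanSpace ℝ (Fin m)) a).prod

noncomputable def homogeneousFuns (k : ℕ) : Submodule ℝ (X → ℝ) :=
  Submodule.span ℝ (Set.range (monomialFun X k))

/-- On the sphere this is the space of restrictions to `X` of polynomials of degree `≤ e`. -/
noncomputable def polyFunsLE (e : ℕ) : Submodule ℝ (X → ℝ) :=
  homogeneousFuns X e ⊔ homogeneousFuns X (e - 1)

lemma coord_mul_mem_homogeneousFuns (a : Fin m) {k : ℕ} {f : X → ℝ}
    (hf : f ∈ homogeneousFuns X k) :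
    (fun y : X => (y : EuclideanSpace ℝ (Fin m)) a) * f ∈ homogeneousFuns X (k + 1) := by
  refine (Submodule.span_le (p := (homogeneousFuns X (k + 1)).comap
    (LinearMap.mulLeft ℝ fun y : X => (y : EuclideanSpace ℝ (Fin m)) a))).2 ?_ hf
  rintro _ ⟨s, rfl⟩
  exact Submodule.subset_span ⟨a ::ₛ s, by funext y; simp [monomialFun, Sym.coe_cons]⟩

lemma inner_pow_mem_homogeneousFuns (x : EuclideanSpace ℝ (Fin m)) (k : ℕ) :
    (fun y : X => ⟪x, (y : EuclideanSpace ℝ (Fin m))⟫ ^ k) ∈ homogeneousFuns X k := by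
  induction k with
  | zero => exact Submodule.subset_span ⟨Sym.nil, by funext y; simp [monomialFun]⟩
  | succ k ih =>
    have hexpand : (fun y : X => ⟪x, (y : EuclideanSpace ℝ (Fin m))⟫ ^ (k + 1)) =
        ∑ a, x a • ((fun y : X => (y : EuclideanSpace ℝ (Fin m)) a) *
          fun y : X => ⟪x, (y : EuclideanSpace ℝ (Fin m))⟫ ^ k) := by
      funext y
      simp only [pow_succ', PiLp.inner_apply, RCLike.inner_apply, conj_trivial, Finset.sum_mul,
        Finset.sum_apply, Pi.smul_apply, Pi.mul_apply, smul_eq_mul]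
      exact Finset.sum_congr rfl fun a _ => by ring
    rw [hexpand]
    exact Submodule.sum_mem _ fun a _ =>
      Submodule.smul_mem _ _ (coord_mul_mem_homogeneousFuns X a ih)

lemma finrank_homogeneousFuns_le (k : ℕ) :
    Module.finrank ℝ (homogeneousFuns X k) ≤ Nat.multichoose m k := by
  have h := finrank_range_le_card (R := ℝ) (monomialFun X k)
  rwa [Sym.card_sym_eq_multichoose, Fintype.card_fin] at h

lemma finrank_polyFunsLE_le (e : ℕ) : Module.finrank ℝ (polyFunsLE X e) ≤ absBound m e := by
  rcases Nat.eq_zero_or_pos e with rfl | he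
  · rw [polyFunsLE, Nat.zero_sub, sup_idem]
    simpa [absBound, Nat.multichoose] using finrank_homogeneousFuns_le X 0
  · rw [absBound, if_neg he.ne']
    refine (Submodule.finrank_add_le_finrank_add_finrank _ _).trans ?_
    have h := add_le_add (finrank_homogeneousFuns_le X e) (finrank_homogeneousFuns_le X (e - 1))
    rwa [Nat.multichoose_eq, Nat.multichoose_eq, show m + (e - 1) - 1 = m + e - 2 by omega] at h

variable {X}

lemma homogeneousFuns_le_add_two (hX : ∀ x ∈ X, ‖x‖ = 1) (k : ℕ) :
    homogeneousFuns X k ≤ homogeneousFuns X (k + 2) := by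
  refine Submodule.span_le.2 ?_
  rintro _ ⟨s, rfl⟩
  have hsq : monomialFun X k s = ∑ a, monomialFun X (k + 2) (a ::ₛ a ::ₛ s) := by
    funext y
    have hy : ∑ a, (y : EuclideanSpace ℝ (Fin m)) a * (y : EuclideanSpace ℝ (Fin m)) a = 1 := by
      simp only [← sq, ← EuclideanSpace.real_norm_sq_eq, hX y y.2, one_pow]
    simp only [Finset.sum_apply, monomialFun, Sym.coe_cons, Multiset.map_cons,
      Multiset.prod_cons, ← mul_assoc, ← Finset.sum_mul, hy, one_mul]
  rw [hsq]
  exact Submodule.sum_mem _ fun a _ => Submodule.subset_span ⟨_, rfl⟩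

lemma homogeneousFuns_le_polyFunsLE (hX : ∀ x ∈ X, ‖x‖ = 1) {k e : ℕ} (hk : k ≤ e) :
    homogeneousFuns X k ≤ polyFunsLE X e := by
  obtain ⟨n, rfl⟩ := Nat.exists_eq_add_of_le hk
  induction n using Nat.twoStepInduction generalizing k with
  | zero => exact le_sup_left
  | one => exact le_sup_right
  | more n ih _ =>
    exact (homogeneousFuns_le_add_two hX k).trans
      (by simpa [add_assoc, add_comm 2] using ih (k := k + 2) (by omega))

lemma eval_inner_mem_polyFunsLE (hX : ∀ x ∈ X, ‖x‖ = 1) (x : EuclideanSpace ℝ (Fin m))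
    {e : ℕ} {P : ℝ[X]} (hP : P.natDegree ≤ e) :
    (fun y : X => P.eval ⟪x, (y : EuclideanSpace ℝ (Fin m))⟫) ∈ polyFunsLE X e := by
  have hsum : (fun y : X => P.eval ⟪x, (y : EuclideanSpace ℝ (Fin m))⟫) =
      ∑ k ∈ Finset.range (e + 1),
        P.coeff k • fun y : X => ⟪x, (y : EuclideanSpace ℝ (Fin m))⟫ ^ k := by
    funext y
    simp [eval_eq_sum_range' (Nat.lt_succ_of_le hP)]
  rw [hsum]
  exact Submodule.sum_mem _ fun k hk => Submodule.smul_mem _ _ <|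
    homogeneousFuns_le_polyFunsLE hX (Nat.lt_succ_iff.mp (Finset.mem_range.mp hk))
      (inner_pow_mem_homogeneousFuns X x k)

lemma card_le_absBound_add_finrank_ker (hX : ∀ x ∈ X, ‖x‖ = 1) {e : ℕ} {P : ℝ[X]}
    (hP : P.natDegree ≤ e) (M : Matrix X X ℝ)
    (hM : ∀ x y : X,
      M x y = P.eval ⟪(x : EuclideanSpace ℝ (Fin m)), (y : EuclideanSpace ℝ (Fin m))⟫) :
    X.card ≤ absBound m e + Module.finrank ℝ (LinearMap.ker M.mulVecLin) := by
  have hrange : LinearMap.range M.mulVecLin ≤ polyFunsLE X e := by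
    rw [Matrix.range_mulVecLin, Submodule.span_le]
    rintro _ ⟨y, rfl⟩
    have hcol : M.col y = fun x : X => P.eval ⟪(y : EuclideanSpace ℝ (Fin m)), x⟫ := by
      funext x
      rw [Matrix.col_apply, hM, real_inner_comm]
    rw [hcol]
    exact eval_inner_mem_polyFunsLE hX _ hP
  have hrank := LinearMap.finrank_range_add_finrank_ker M.mulVecLin
  rw [Module.finrank_fintype_fun_eq_card, Fintype.card_coe] at hrank
  have := (Submodule.finrank_mono hrange).trans (finrank_polyFunsLE_le X e)
  omega

end PolynomialFunctions

lemma Lagrange.eval_basis_eq_prod {F ι : Type*} [Field F] [DecidableEq ι] (s : Finset ι)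
    (v : ι → F) (i : ι) (t : F) :
    (Lagrange.basis s v i).eval t = ∏ j ∈ s.erase i, (t - v j) / (v i - v j) := by
  simp only [Lagrange.basis, eval_prod, Lagrange.basisDivisor, eval_mul, eval_C, eval_sub, eval_X,
    div_eq_inv_mul]

lemma ncard_setOf_exists_ne_zero {α : Type*} {d : ℕ} {θ : Fin (d + 1) → α}
    (hθ : Function.Injective θ) : {t | ∃ i : Fin (d + 1), i ≠ 0 ∧ θ i = t}.ncard = d := by
  have hset : {t | ∃ i : Fin (d + 1), i ≠ 0 ∧ θ i = t} = Set.range (θ ∘ Fin.succ) := by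
    ext t
    simp [Fin.exists_fin_succ]
  rw [hset, Set.ncard_range_of_injective (hθ.comp (Fin.succ_injective d)),
    Nat.card_eq_fintype_card, Fintype.card_fin]

lemma relAdjMatrix_add_smul_one_apply {m : ℕ} {X : Finset (EuclideanSpace ℝ (Fin m))}
    (hX : ∀ x ∈ X, ‖x‖ = 1) {t : ℝ} (ht : t ≠ 1) {P : ℝ[X]} (hPt : P.eval t = 1)
    (hP : ∀ s ∈ innerSet m X, s ≠ t → P.eval s = 0) (x y : X) :
    (relAdjMatrix m X t + P.eval 1 • 1) x y =
      P.eval ⟪(x : EuclideanSpace ℝ (Fin m)), (y : EuclideanSpace ℝ (Fin m))⟫ := by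
  by_cases hxy : x = y
  · subst hxy
    simp [relAdjMatrix, hX x x.2, ht.symm]
  · have hmem : ⟪(x : EuclideanSpace ℝ (Fin m)), (y : EuclideanSpace ℝ (Fin m))⟫ ∈ innerSet m X :=
      ⟨x, x.2, y, y.2, fun h => hxy (Subtype.ext h), rfl⟩
    by_cases hxyt : ⟪(x : EuclideanSpace ℝ (Fin m)), (y : EuclideanSpace ℝ (Fin m))⟫ = t
    · simp [relAdjMatrix, hxy, hxyt, hPt]
    · simp [relAdjMatrix, hxy, hxyt, hP _ hmem hxyt]

lemma Matrix.exists_mulVec_eq_neg_smul_of_finrank_ker_pos {n : Type*} [Fintype n] [DecidableEq n]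
    (A : Matrix n n ℝ) (c : ℝ) (h : 0 < Module.finrank ℝ (LinearMap.ker (A + c • 1).mulVecLin)) :
    ∃ v : n → ℝ, v ≠ 0 ∧ A *ᵥ v = (-c) • v := by
  obtain ⟨⟨v, hv⟩, hv0⟩ := Module.finrank_pos_iff_exists_ne_zero.mp h
  refine ⟨v, fun h => hv0 (Subtype.ext h), ?_⟩
  have hv : A *ᵥ v + c • v = 0 := by
    simpa [Matrix.add_mulVec, Matrix.smul_mulVec, Matrix.one_mulVec] using hv
  rw [neg_smul]
  exact eq_neg_of_add_eq_zero_left hv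

theorem stmt_11_general (m d : ℕ) (X : Finset (EuclideanSpace ℝ (Fin m)))
    (hsph : ∀ x ∈ X, ‖x‖ = 1)
    (hbig : X.card > absBound m (d - 1))
    (θ : Fin (d + 1) → ℝ) (hθ : StrictAnti θ) (hθ0 : θ 0 = 1)
    (hrange : innerSet m X = {t | ∃ i : Fin (d + 1), i ≠ 0 ∧ θ i = t}) :
    (innerSet m X).ncard = d ∧
    ∀ i : Fin (d + 1), i ≠ 0 →
      (∃ v : X → ℝ, v ≠ 0 ∧
        (relAdjMatrix m X (θ i)).mulVec v =
          (-(∏ j ∈ Finset.univ.filter (fun j : Fin (d + 1) => j ≠ 0 ∧ j ≠ i),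
              (θ 0 - θ j) / (θ i - θ j))) • v) ∧
      0 < (X.card : ℤ) - (absBound m (d - 1) : ℤ) ∧
      (X.card : ℤ) - (absBound m (d - 1) : ℤ) ≤
        (Module.finrank ℝ
          (LinearMap.ker
            (Matrix.mulVecLin
              (relAdjMatrix m X (θ i) +
                (∏ j ∈ Finset.univ.filter (fun j : Fin (d + 1) => j ≠ 0 ∧ j ≠ i),
                  (θ 0 - θ j) / (θ i - θ j)) • (1 : Matrix X X ℝ)))) : ℤ) := by
  have hθinj := hθ.injective
  refine ⟨hrange ▸ ncard_setOf_exists_ne_zero hθinj, fun i hi => ?_⟩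
  set s := Finset.univ.erase (0 : Fin (d + 1))
  have his : i ∈ s := Finset.mem_erase.2 ⟨hi, Finset.mem_univ i⟩
  set P := Lagrange.basis s θ i
  have hK : ∏ j ∈ Finset.univ.filter (fun j : Fin (d + 1) => j ≠ 0 ∧ j ≠ i),
      (θ 0 - θ j) / (θ i - θ j) = P.eval 1 := by
    rw [Lagrange.eval_basis_eq_prod, ← hθ0]
    congr 1
    ext j
    simp [s, and_comm]
  have hdeg : P.natDegree ≤ d - 1 := by
    simp [P, Lagrange.natDegree_basis hθinj.injOn his, s]
  have hvanish : ∀ t ∈ innerSet m X, t ≠ θ i → P.eval t = 0 := by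
    rw [hrange]
    rintro _ ⟨j, hj0, rfl⟩ hji
    exact Lagrange.eval_basis_of_ne (fun h => hji (h ▸ rfl))
      (Finset.mem_erase.2 ⟨hj0, Finset.mem_univ j⟩)
  have hker := card_le_absBound_add_finrank_ker hsph hdeg _ <|
    relAdjMatrix_add_smul_one_apply hsph (hθ0 ▸ hθinj.ne hi)
      (Lagrange.eval_basis_self hθinj.injOn his) hvanish
  rw [hK]
  exact ⟨Matrix.exists_mulVec_eq_neg_smul_of_finrank_ker_pos _ _ (by omega), by omega, by omega⟩

/-- Let `X ⊆ S^{m-1}` be a finite set with `|A(X)| ≤ d` and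
`|X| > N(m, d-1) = C(m+d-2, d-1) + C(m+d-3, d-2)`.  Then `|A(X)| = d`; writing
`A(X) = {θ 1, …, θ d}` with `θ 1 > ⋯ > θ d` and `θ 0 = 1`, for each `i ∈ {1, …, d}` the
number `-K i` is an eigenvalue of the adjacency matrix `A_i` of the graph `(X, R_i)`,
with multiplicity (the dimension of the kernel of `A_i + K i • I`) at least
`|X| - N(m, d-1) > 0`, where `K i = ∏_{j ∈ {1,…,d}, j ≠ i} (θ 0 - θ j) / (θ i - θ j)`. -/
theorem stmt_11 (m d : ℕ) (X : Finset (EuclideanSpace ℝ (Fin m)))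
    (hsph : ∀ x ∈ X, ‖x‖ = 1) (hcard : 2 ≤ X.card)
    (hncard : (innerSet m X).ncard ≤ d)
    (hbig : X.card > absBound m (d - 1))
    (θ : Fin (d + 1) → ℝ) (hθ : StrictAnti θ) (hθ0 : θ 0 = 1)
    (hrange : innerSet m X = {t | ∃ i : Fin (d + 1), i ≠ 0 ∧ θ i = t}) :
    (innerSet m X).ncard = d ∧
    ∀ i : Fin (d + 1), i ≠ 0 →
      (∃ v : X → ℝ, v ≠ 0 ∧
        (relAdjMatrix m X (θ i)).mulVec v =
          (-(∏ j ∈ Finset.univ.filter (fun j : Fin (d + 1) => j ≠ 0 ∧ j ≠ i),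
              (θ 0 - θ j) / (θ i - θ j))) • v) ∧
      0 < (X.card : ℤ) - (absBound m (d - 1) : ℤ) ∧
      (X.card : ℤ) - (absBound m (d - 1) : ℤ) ≤
        (Module.finrank ℝ
          (LinearMap.ker
            (Matrix.mulVecLin
              (relAdjMatrix m X (θ i) +
                (∏ j ∈ Finset.univ.filter (fun j : Fin (d + 1) => j ≠ 0 ∧ j ≠ i),
                  (θ 0 - θ j) / (θ i - θ j)) • (1 : Matrix X X ℝ)))) : ℤ) :=
  stmt_11_general m d X hsph hbig θ hθ hθ0 hrange
end
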